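/- (Weighted Dilation) Let k ≥ 1 and let c₁, …, c_k > 0. Let B be the Laplacian of the path graph on vertex set {0, 1, …, k} whose edge {i−1, i} has weight c_i for 1 ≤ i ≤ k, and let A be the Laplacian of the graph on the same vertex set containing the single edge {0, k} with weight a > 0. Then σ(A, B) = a · Σ_{i=1}^{k} 1/c_i; equivalently, for τ ≥ 0 the matrix τ·B − A is positive semidefinite if and only if τ ≥ a · Σ_{i=1}^{k} 1/c_i. -/

import Mathlib

open Matrix Finset

noncomputable section

/-- The Laplacian matrix of a weighting `w` on a finite vertex set `V`. -/
def lap {V : Type*} [Fintype V] [DecidableEq V] (w : V → V → ℝ) : Matrix V V ℝ :=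
  fun u v => if u = v then ∑ x, w v x else -(w u v)

/-- The support `σ(A,B)`: the least `τ ≥ 0` such that `τ•B − A` is positive semidefinite. -/
def sigmaSupp {n : Type*} [Fintype n] (A B : Matrix n n ℝ) : ℝ :=
  sInf {τ : ℝ | 0 ≤ τ ∧ (τ • B - A).PosSemidef}

/-- The weighting of the path graph on `{0,…,k}` in which the edge `{i, i+1}` has weight
`c i` for `i = 0, …, k−1`. -/
def pathW (k : ℕ) (c : Fin k → ℝ) : Fin (k + 1) → Fin (k + 1) → ℝ :=
  fun u v =>
    (if h : (u : ℕ) + 1 = (v : ℕ) then c ⟨u, by have := v.isLt; omega⟩ else 0) +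
    (if h : (v : ℕ) + 1 = (u : ℕ) then c ⟨v, by have := u.isLt; omega⟩ else 0)

/-- The weighting on `{0,…,k}` with a single edge `{0, k}` of weight `a`. -/
def singleW (k : ℕ) (a : ℝ) : Fin (k + 1) → Fin (k + 1) → ℝ :=
  fun u v => if ((u : ℕ) = 0 ∧ (v : ℕ) = k) ∨ ((v : ℕ) = 0 ∧ (u : ℕ) = k) then a else 0

lemma lap_entry {V : Type*} [Fintype V] [DecidableEq V] (w : V → V → ℝ)
    (hdiag : ∀ v, w v v = 0) (u v : V) :
    lap w u v = (if u = v then ∑ t, w v t else 0) - w u v := by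
  unfold lap
  split
  · next h => subst h; simp [hdiag]
  · ring

lemma lap_quad {V : Type*} [Fintype V] [DecidableEq V] (w : V → V → ℝ)
    (hsymm : ∀ u v, w u v = w v u) (hdiag : ∀ v, w v v = 0) (x : V → ℝ) :
    x ⬝ᵥ (lap w *ᵥ x) = (∑ u, ∑ v, w u v * (x u - x v) ^ 2) / 2 := by
  have key : ∀ u, (lap w *ᵥ x) u = (∑ t, w u t) * x u - ∑ v, w u v * x v := by
    intro u
    simp only [mulVec, dotProduct, lap_entry w hdiag, sub_mul, ite_mul, zero_mul]
    rw [Finset.sum_sub_distrib]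
    congr 1
    rw [Finset.sum_ite_eq univ u (fun v => (∑ t, w v t) * x v)]
    simp
  have swap : ∑ u, ∑ v, w u v * (x v) ^ 2 = ∑ u, ∑ v, w u v * (x u) ^ 2 := by
    rw [Finset.sum_comm]
    exact Finset.sum_congr rfl fun u _ => Finset.sum_congr rfl fun v _ => by rw [hsymm]
  have expand : ∑ u, ∑ v, w u v * (x u - x v) ^ 2
      = (∑ u, ∑ v, w u v * x u ^ 2) + (∑ u, ∑ v, w u v * x v ^ 2)
        - 2 * ∑ u, ∑ v, w u v * (x u * x v) := by
    rw [← Finset.sum_add_distrib, Finset.mul_sum, ← Finset.sum_sub_distrib]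
    refine Finset.sum_congr rfl fun u _ => ?_
    rw [← Finset.sum_add_distrib, Finset.mul_sum, ← Finset.sum_sub_distrib]
    exact Finset.sum_congr rfl fun v _ => by ring
  have step1 : x ⬝ᵥ (lap w *ᵥ x)
      = (∑ u, ∑ v, w u v * x u ^ 2) - ∑ u, ∑ v, w u v * (x u * x v) := by
    simp only [dotProduct, key]
    rw [← Finset.sum_sub_distrib]
    refine Finset.sum_congr rfl fun u _ => ?_
    rw [mul_sub]
    congr 1
    · rw [← Finset.sum_mul]; ring
    · rw [Finset.mul_sum]; exact Finset.sum_congr rfl fun v _ => by ring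
  rw [step1, expand, swap]; ring

lemma path_half (k : ℕ) (c : Fin k → ℝ) (f : Fin (k + 1) → Fin (k + 1) → ℝ) :
    ∑ u : Fin (k+1), ∑ v : Fin (k+1), (if h : (u : ℕ) + 1 = (v : ℕ) then c ⟨u, by have := v.isLt; omega⟩ else 0) * f u v
      = ∑ i : Fin k, c i * f i.castSucc i.succ := by
  have inner : ∀ u : Fin (k + 1),
      (∑ v : Fin (k+1), (if h : (u : ℕ) + 1 = (v : ℕ) then c ⟨u, by have := v.isLt; omega⟩ else 0) * f u v)
        = if h : (u : ℕ) < k then c ⟨u, h⟩ * f u ⟨(u : ℕ) + 1, by omega⟩ else 0 := by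
    intro u
    by_cases h : (u : ℕ) < k
    · rw [dif_pos h, Finset.sum_eq_single (⟨(u : ℕ) + 1, by omega⟩ : Fin (k + 1))]
      · rw [dif_pos rfl]
      · intro v _ hv
        rw [dif_neg, zero_mul]
        intro hh; exact hv (Fin.ext hh.symm)
      · intro h'; exact absurd (Finset.mem_univ _) h'
    · rw [dif_neg h]
      refine Finset.sum_eq_zero fun v _ => ?_
      rw [dif_neg, zero_mul]
      intro hv; exact h (by have := v.isLt; omega)
  rw [Finset.sum_congr rfl fun u _ => inner u, Fin.sum_univ_castSucc,
    dif_neg (by simp)]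
  rw [add_zero]
  refine Finset.sum_congr rfl fun i _ => ?_
  rw [dif_pos (by simpa using i.isLt)]
  exact congrArg₂ (fun (j : Fin k) (v : Fin (k + 1)) => c j * f i.castSucc v)
    (Fin.ext (by simp)) (Fin.ext (by simp))

lemma path_sum (k : ℕ) (c : Fin k → ℝ) (x : Fin (k + 1) → ℝ) :
    ∑ u, ∑ v, pathW k c u v * (x u - x v) ^ 2
      = 2 * ∑ i : Fin k, c i * (x i.succ - x i.castSucc) ^ 2 := by
  have hsplit : ∑ u, ∑ v, pathW k c u v * (x u - x v) ^ 2
      = (∑ u : Fin (k+1), ∑ v : Fin (k+1), (if h : (u : ℕ) + 1 = (v : ℕ) then c ⟨u, by have := v.isLt; omega⟩ else 0)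
            * (x u - x v) ^ 2)
        + ∑ u : Fin (k+1), ∑ v : Fin (k+1), (if h : (v : ℕ) + 1 = (u : ℕ) then c ⟨v, by have := u.isLt; omega⟩ else 0)
            * (x u - x v) ^ 2 := by
    rw [← Finset.sum_add_distrib]
    refine Finset.sum_congr rfl fun u _ => ?_
    rw [← Finset.sum_add_distrib]
    refine Finset.sum_congr rfl fun v _ => ?_
    unfold pathW; ring
  rw [hsplit]
  have h2 : ∑ u : Fin (k+1), ∑ v : Fin (k+1), (if h : (v : ℕ) + 1 = (u : ℕ) then c ⟨v, by have := u.isLt; omega⟩ else 0)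
        * (x u - x v) ^ 2
      = ∑ i : Fin k, c i * (x i.succ - x i.castSucc) ^ 2 := by
    rw [Finset.sum_comm]
    have := path_half k c (fun u v => (x v - x u) ^ 2)
    rw [this]
  have h1 : ∑ u : Fin (k+1), ∑ v : Fin (k+1), (if h : (u : ℕ) + 1 = (v : ℕ) then c ⟨u, by have := v.isLt; omega⟩ else 0)
        * (x u - x v) ^ 2
      = ∑ i : Fin k, c i * (x i.succ - x i.castSucc) ^ 2 := by
    rw [path_half k c (fun u v => (x u - x v) ^ 2)]
    exact Finset.sum_congr rfl fun i _ => by ring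
  rw [h1, h2]; ring

lemma single_sum (k : ℕ) (hk : 1 ≤ k) (a : ℝ) (x : Fin (k + 1) → ℝ) :
    ∑ u, ∑ v, singleW k a u v * (x u - x v) ^ 2
      = 2 * (a * (x (Fin.last k) - x 0) ^ 2) := by
  have hne : (0 : Fin (k + 1)) ≠ Fin.last k := by
    intro h
    have := congrArg Fin.val h
    simp [Fin.last] at this
    omega
  have inner : ∀ u : Fin (k + 1), ∑ v, singleW k a u v * (x u - x v) ^ 2
      = (if u = 0 then a * (x u - x (Fin.last k)) ^ 2 else 0)
        + (if u = Fin.last k then a * (x u - x 0) ^ 2 else 0) := by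
    intro u
    by_cases h1 : u = 0
    · subst h1
      rw [if_pos rfl, if_neg hne, add_zero,
        Finset.sum_eq_single (Fin.last k)]
      · unfold singleW
        rw [if_pos (Or.inl ⟨rfl, by simp⟩)]
      · intro v _ hv
        unfold singleW
        rw [if_neg, zero_mul]
        rintro (⟨-, h⟩ | ⟨h, h'⟩)
        · exact hv (Fin.ext (by simpa [Fin.last] using h))
        · simp at h'; omega
      · intro h'; exact absurd (Finset.mem_univ _) h'
    · by_cases h2 : u = Fin.last k
      · subst h2
        rw [if_neg h1, if_pos rfl, zero_add,
          Finset.sum_eq_single (0 : Fin (k + 1))]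
        · unfold singleW
          rw [if_pos (Or.inr ⟨rfl, by simp⟩)]
        · intro v _ hv
          unfold singleW
          rw [if_neg, zero_mul]
          rintro (⟨h, -⟩ | ⟨h, -⟩)
          · simp [Fin.last] at h; omega
          · exact hv (Fin.ext (by simpa using h))
        · intro h'; exact absurd (Finset.mem_univ _) h'
      · rw [if_neg h1, if_neg h2, add_zero]
        refine Finset.sum_eq_zero fun v _ => ?_
        unfold singleW
        rw [if_neg, zero_mul]
        rintro (⟨h, -⟩ | ⟨-, h⟩)
        · exact h1 (Fin.ext (by simpa using h))
        · exact h2 (Fin.ext (by simpa [Fin.last] using h))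
  rw [Finset.sum_congr rfl fun u _ => inner u, Finset.sum_add_distrib,
    Finset.sum_ite_eq' univ (0 : Fin (k + 1)),
    Finset.sum_ite_eq' univ (Fin.last k)]
  simp only [Finset.mem_univ, if_true]
  ring

lemma pathW_symm (k : ℕ) (c : Fin k → ℝ) (u v : Fin (k + 1)) :
    pathW k c u v = pathW k c v u := add_comm _ _

lemma pathW_diag (k : ℕ) (c : Fin k → ℝ) (v : Fin (k + 1)) : pathW k c v v = 0 := by
  unfold pathW
  rw [dif_neg (by omega)]
  norm_num

lemma singleW_symm (k : ℕ) (a : ℝ) (u v : Fin (k + 1)) :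
    singleW k a u v = singleW k a v u := by
  unfold singleW
  exact if_congr or_comm rfl rfl

lemma singleW_diag (k : ℕ) (hk : 1 ≤ k) (a : ℝ) (v : Fin (k + 1)) : singleW k a v v = 0 := by
  unfold singleW
  rw [if_neg]
  rintro (⟨h1, h2⟩ | ⟨h1, h2⟩) <;> omega

lemma lap_isHermitian {V : Type*} [Fintype V] [DecidableEq V] (w : V → V → ℝ)
    (hsymm : ∀ u v, w u v = w v u) : (lap w).IsHermitian := by
  refine Matrix.IsHermitian.ext fun i j => ?_
  rw [star_trivial]
  unfold lap
  by_cases h : i = j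
  · subst h; simp
  · rw [if_neg h, if_neg (Ne.symm h), hsymm]

lemma tele (k : ℕ) (x : Fin (k + 1) → ℝ) :
    ∑ i : Fin k, (x i.succ - x i.castSucc) = x (Fin.last k) - x 0 := by
  calc ∑ i : Fin k, (x i.succ - x i.castSucc)
      = ∑ i : Fin k, ((fun n : ℕ => x ⟨min (n + 1) k, by omega⟩ - x ⟨min n k, by omega⟩) (i : ℕ)) := by
        refine Finset.sum_congr rfl fun i _ => ?_
        have hi := i.isLt
        exact congrArg₂ (fun p q : Fin (k + 1) => x p - x q)
          (Fin.ext (by simp only [Fin.val_succ]; omega))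
          (Fin.ext (by simp only [Fin.coe_castSucc]; omega))
    _ = ∑ n ∈ Finset.range k, (x ⟨min (n + 1) k, by omega⟩ - x ⟨min n k, by omega⟩) := by
        exact Fin.sum_univ_eq_sum_range
          (fun n : ℕ => x ⟨min (n + 1) k, by omega⟩ - x ⟨min n k, by omega⟩) k
    _ = x ⟨min k k, by omega⟩ - x ⟨min 0 k, by omega⟩ :=
        Finset.sum_range_sub (fun n => x ⟨min n k, by omega⟩) k
    _ = x (Fin.last k) - x 0 := by
        exact congrArg₂ (fun p q : Fin (k + 1) => x p - x q)
          (Fin.ext (by simp [Fin.last])) (Fin.ext (by simp))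

/-- **Weighted Dilation.** If `B` is the Laplacian of the path `0 – 1 – ⋯ – k` with positive
edge weights `c₁,…,c_k` and `A` is the Laplacian of the single edge `{0,k}` of weight `a > 0`,
then `σ(A,B) = a·Σᵢ 1/cᵢ`; equivalently, for `τ ≥ 0`, `τ•B − A` is positive semidefinite
iff `τ ≥ a·Σᵢ 1/cᵢ`. -/
theorem weighted_dilation (k : ℕ) (hk : 1 ≤ k) (c : Fin k → ℝ) (hc : ∀ i, 0 < c i)
    (a : ℝ) (ha : 0 < a) :
    sigmaSupp (lap (singleW k a)) (lap (pathW k c)) = a * ∑ i, 1 / c i ∧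
    ∀ τ : ℝ, 0 ≤ τ →
      ((τ • lap (pathW k c) - lap (singleW k a)).PosSemidef ↔ a * ∑ i, 1 / c i ≤ τ) := by
  have hcne : ∀ i, c i ≠ 0 := fun i => (hc i).ne'
  have hSpos : 0 < ∑ i, 1 / c i :=
    Finset.sum_pos (fun i _ => one_div_pos.mpr (hc i)) ⟨⟨0, hk⟩, Finset.mem_univ _⟩
  have hermB := lap_isHermitian (pathW k c) (pathW_symm k c)
  have hermA := lap_isHermitian (singleW k a) (singleW_symm k a)
  have QF : ∀ (τ : ℝ) (x : Fin (k + 1) → ℝ),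
      x ⬝ᵥ ((τ • lap (pathW k c) - lap (singleW k a)) *ᵥ x)
        = τ * ∑ i : Fin k, c i * (x i.succ - x i.castSucc) ^ 2
          - a * (x (Fin.last k) - x 0) ^ 2 := by
    intro τ x
    rw [sub_mulVec, smul_mulVec, dotProduct_sub, dotProduct_smul, smul_eq_mul,
      lap_quad _ (pathW_symm k c) (pathW_diag k c),
      lap_quad _ (singleW_symm k a) (singleW_diag k hk a),
      path_sum, single_sum k hk]
    ring
  have CS : ∀ x : Fin (k + 1) → ℝ,
      (x (Fin.last k) - x 0) ^ 2
        ≤ (∑ i, 1 / c i) * ∑ i : Fin k, c i * (x i.succ - x i.castSucc) ^ 2 := by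
    intro x
    rw [← tele k x]
    refine Finset.sum_sq_le_sum_mul_sum_of_sq_eq_mul univ
      (fun i _ => (one_div_pos.mpr (hc i)).le)
      (fun i _ => mul_nonneg (hc i).le (sq_nonneg _)) (fun i _ => ?_)
    rw [one_div, inv_mul_cancel_left₀ (hcne i)]
  have main : ∀ τ : ℝ, 0 ≤ τ →
      ((τ • lap (pathW k c) - lap (singleW k a)).PosSemidef ↔ a * ∑ i, 1 / c i ≤ τ) := by
    intro τ hτ0
    constructor
    · intro hpsd
      set x₀ : Fin (k + 1) → ℝ :=
        fun j => ∑ i ∈ Finset.range (j : ℕ), (if h : i < k then 1 / c ⟨i, h⟩ else 0) with hx₀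
      have hd : ∀ i : Fin k, x₀ i.succ - x₀ i.castSucc = 1 / c i := by
        intro i
        show (∑ j ∈ Finset.range ((i.succ : Fin (k+1)) : ℕ), _)
          - (∑ j ∈ Finset.range ((i.castSucc : Fin (k+1)) : ℕ), _) = _
        rw [Fin.val_succ, Fin.coe_castSucc, Finset.sum_range_succ, dif_pos i.isLt]
        simp
      have hxl : x₀ (Fin.last k) = ∑ i, 1 / c i := by
        show ∑ j ∈ Finset.range ((Fin.last k : Fin (k+1)) : ℕ), _ = _
        rw [Fin.val_last, ← Fin.sum_univ_eq_sum_range (fun i => if h : i < k then 1 / c ⟨i, h⟩ else 0) k]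
        exact Finset.sum_congr rfl fun i _ => by rw [dif_pos i.isLt]
      have hx0 : x₀ 0 = 0 := by
        show ∑ j ∈ Finset.range ((0 : Fin (k+1)) : ℕ), _ = (0 : ℝ)
        simp
      have h1 := hpsd.dotProduct_mulVec_nonneg x₀
      rw [star_trivial, QF τ x₀] at h1
      have h2 : ∑ i : Fin k, c i * (x₀ i.succ - x₀ i.castSucc) ^ 2 = ∑ i, 1 / c i := by
        refine Finset.sum_congr rfl fun i _ => ?_
        rw [hd i]
        have := hcne i
        field_simp
      rw [h2, hxl, hx0] at h1
      nlinarith [hSpos]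
    · intro hτ
      have hBsym : ∀ i j, lap (pathW k c) i j = lap (pathW k c) j i := fun i j => by
        have h := hermB.apply j i
        rwa [star_trivial] at h
      have hermM : (τ • lap (pathW k c) - lap (singleW k a)).IsHermitian := by
        refine Matrix.IsHermitian.sub ?_ hermA
        refine Matrix.IsHermitian.ext fun i j => ?_
        rw [star_trivial, Matrix.smul_apply, Matrix.smul_apply, hBsym j i]
      refine Matrix.PosSemidef.of_dotProduct_mulVec_nonneg hermM fun x => ?_
      rw [star_trivial, QF τ x]
      have h1 : 0 ≤ ∑ i : Fin k, c i * (x i.succ - x i.castSucc) ^ 2 :=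
        Finset.sum_nonneg fun i _ => mul_nonneg (hc i).le (sq_nonneg _)
      have h2 := CS x
      nlinarith [mul_le_mul_of_nonneg_right hτ h1, mul_le_mul_of_nonneg_left h2 ha.le]
  refine ⟨?_, main⟩
  have hset : {τ : ℝ | 0 ≤ τ ∧ (τ • lap (pathW k c) - lap (singleW k a)).PosSemidef}
      = Set.Ici (a * ∑ i, 1 / c i) := by
    ext τ
    simp only [Set.mem_setOf_eq, Set.mem_Ici]
    constructor
    · rintro ⟨hτ0, hpsd⟩
      exact (main τ hτ0).1 hpsd
    · intro hτ
      have hτ0 : 0 ≤ τ := le_trans (mul_pos ha hSpos).le hτ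
      exact ⟨hτ0, (main τ hτ0).2 hτ⟩
  rw [sigmaSupp, hset, csInf_Ici]
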